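/- arXiv:1803.07953 — 2 statements merged into one kernel-verified Lean document; each statement's English description precedes it below -/
import Mathlib

section
/- Let C be a 2-torsion free commutative ring with unity, let n ≥ 2, and let T_n(C) denote the algebra of n×n upper triangular matrices over C. Linear maps f, g, h : T_n(C) → T_n(C) form a left {g,h}-derivation triple (i.e., f is a left {g,h}-derivation) if and only if there exist matrices γ, δ ∈ T_n(C) whose entries outside the first row are all zero such that g(A) = Aγ and h(A) = Aδ for all A ∈ T_n(C), and f = g + h. -/
/-!
Putting `b = 1` in the two identities gives `g a = f a - a h(1)` and `h a = f a - a g(1)`, and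
then `d a := f a - a (g 1 + h 1)` satisfies `d (ab) = a d(b) + b d(a) + (ba - ab) h(1)`.
For an idempotent `e` this reads `d e = 2 e d(e)`, and multiplying by `e` gives `e d(e) = 0`,
so `d` vanishes on idempotents. Since `T_n(C)` is spanned by the idempotents `E_ii` and
`E_ii + E_ij`, `d = 0`; what is left of the identities is that all commutators `ab - ba`
annihilate `g 1` and `h 1` from the left. In `T_n(C)` commutators have zero first column and
`E_1i` is a commutator, so these are exactly the matrices supported on the first row.
-/

/-- The algebra `T_n(C)` of `n × n` upper triangular matrices over `C`,
as a subalgebra of `Matrix (Fin n) (Fin n) C`. -/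
def upperTriangularAlgebra (n : ℕ) (C : Type*) [CommRing C] :
    Subalgebra C (Matrix (Fin n) (Fin n) C) where
  carrier := {A | A.BlockTriangular (id : Fin n → Fin n)}
  mul_mem' ha hb := ha.mul hb
  add_mem' ha hb := ha.add hb
  algebraMap_mem' r := by
    intro i j hij
    have hij' : i ≠ j := ne_of_gt hij
    rw [Matrix.algebraMap_matrix_apply, if_neg hij']

section LeftGHDerivation

variable {C A : Type*} [CommSemiring C] [Ring A] [Algebra C A]

def IsLeftGHDerivation (f g h : A →ₗ[C] A) : Prop :=
  ∀ a b, f (a * b) = a * g b + b * h a ∧ f (a * b) = a * h b + b * g a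

namespace IsLeftGHDerivation

variable {f g h : A →ₗ[C] A}

theorem symm (hD : IsLeftGHDerivation f g h) : IsLeftGHDerivation f h g :=
  fun a b => (hD a b).symm

theorem map_eq_sub_mul (hD : IsLeftGHDerivation f g h) (a : A) : g a = f a - a * h 1 := by
  have := (hD a 1).2
  rw [mul_one, one_mul] at this
  rw [this, add_sub_cancel_left]

theorem map_mul_sub_mul (hD : IsLeftGHDerivation f g h) (a b : A) :
    f (a * b) - a * b * (g 1 + h 1) =
      a * (f b - b * (g 1 + h 1)) + b * (f a - a * (g 1 + h 1)) + (b * a - a * b) * h 1 := by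
  rw [(hD a b).1, hD.map_eq_sub_mul b, hD.symm.map_eq_sub_mul a]
  noncomm_ring

theorem map_eq_mul_of_isIdempotentElem (hD : IsLeftGHDerivation f g h) {e : A}
    (he : IsIdempotentElem e) : f e = e * (g 1 + h 1) := by
  set d := f e - e * (g 1 + h 1)
  have hd : d = e * d + e * d := by
    simpa only [he.eq, sub_self, zero_mul, add_zero] using hD.map_mul_sub_mul e e
  have hed : e * d = 0 := by
    have := congrArg (e * ·) hd
    simp only [mul_add, ← mul_assoc, he.eq] at this
    simpa using this
  rw [← sub_eq_zero]
  simpa [hed] using hd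

theorem eq_mulRight (hspan : Submodule.span C {e : A | IsIdempotentElem e} = ⊤)
    (hD : IsLeftGHDerivation f g h) : f = LinearMap.mulRight C (g 1 + h 1) :=
  LinearMap.ext_on hspan fun _ he => hD.map_eq_mul_of_isIdempotentElem he

theorem commutator_mul_map_one_eq_zero (hspan : Submodule.span C {e : A | IsIdempotentElem e} = ⊤)
    (hD : IsLeftGHDerivation f g h) (a b : A) : (a * b - b * a) * h 1 = 0 := by
  have hf : ∀ x, f x - x * (g 1 + h 1) = 0 := fun x => by
    rw [hD.eq_mulRight hspan, LinearMap.mulRight_apply, sub_self]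
  simpa only [hf, mul_zero, zero_add, eq_comm] using hD.map_mul_sub_mul b a

theorem of_eq_mul {γ δ : A} (hγ : ∀ a b, (a * b - b * a) * γ = 0)
    (hδ : ∀ a b, (a * b - b * a) * δ = 0) (hg : ∀ a, g a = a * γ) (hh : ∀ a, h a = a * δ)
    (hf : f = g + h) : IsLeftGHDerivation f g h := by
  intro a b
  have hcomm {x : A} (hx : ∀ a b, (a * b - b * a) * x = 0) : a * b * x = b * a * x :=
    sub_eq_zero.1 (by rw [← sub_mul]; exact hx a b)
  subst hf
  simp only [LinearMap.add_apply, hg, hh, ← mul_assoc]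
  exact ⟨by rw [hcomm hδ], by rw [hcomm hγ, add_comm]⟩

end IsLeftGHDerivation

theorem isLeftGHDerivation_iff (hspan : Submodule.span C {e : A | IsIdempotentElem e} = ⊤)
    (f g h : A →ₗ[C] A) :
    IsLeftGHDerivation f g h ↔ ∃ γ δ : A,
      (∀ a b, (a * b - b * a) * γ = 0) ∧ (∀ a b, (a * b - b * a) * δ = 0) ∧
      (∀ a, g a = a * γ) ∧ (∀ a, h a = a * δ) ∧ f = g + h := by
  refine ⟨fun hD => ?_, fun ⟨γ, δ, hγ, hδ, hg, hh, hf⟩ => .of_eq_mul hγ hδ hg hh hf⟩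
  have hf := hD.eq_mulRight hspan
  have hg (a : A) : g a = a * g 1 := by
    rw [hD.map_eq_sub_mul, hf, LinearMap.mulRight_apply, mul_add, add_sub_cancel_right]
  have hh (a : A) : h a = a * h 1 := by
    rw [hD.symm.map_eq_sub_mul, hf, LinearMap.mulRight_apply, mul_add, add_sub_cancel_left]
  refine ⟨g 1, h 1, hD.symm.commutator_mul_map_one_eq_zero hspan,
    hD.commutator_mul_map_one_eq_zero hspan, hg, hh, LinearMap.ext fun a => ?_⟩
  rw [hf, LinearMap.add_apply, hg a, hh a, LinearMap.mulRight_apply, mul_add]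

end LeftGHDerivation

open Matrix

namespace upperTriangularAlgebra

variable {n : ℕ} {C : Type*} [CommRing C]

theorem single_mem {i j : Fin n} (hij : i ≤ j) (c : C) :
    single i j c ∈ upperTriangularAlgebra n C :=
  blockTriangular_single hij c

theorem single_apply_mem (A : upperTriangularAlgebra n C) (i j : Fin n) :
    single i j ((A : Matrix (Fin n) (Fin n) C) i j) ∈ upperTriangularAlgebra n C := by
  rcases le_or_gt i j with hij | hji
  · exact single_mem hij _
  · rw [A.2 hji, single_zero]
    exact zero_mem _

theorem single_mem_span_isIdempotentElem {i j : Fin n} (hij : i ≤ j) :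
    (⟨single i j 1, single_mem hij 1⟩ : upperTriangularAlgebra n C) ∈
      Submodule.span C {e : upperTriangularAlgebra n C | IsIdempotentElem e} := by
  have hdiag (k : Fin n) : IsIdempotentElem
      (⟨single k k 1, single_mem le_rfl 1⟩ : upperTriangularAlgebra n C) :=
    Subtype.ext (by simp [single_mul_single_same])
  rcases hij.eq_or_lt with rfl | hlt
  · exact Submodule.subset_span (hdiag i)
  · have hsum : IsIdempotentElem
        (⟨single i i 1 + single i j 1, add_mem (single_mem le_rfl 1) (single_mem hij 1)⟩ :
          upperTriangularAlgebra n C) :=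
      Subtype.ext (by
        simp [add_mul, mul_add, single_mul_single_same, single_mul_single_of_ne _ _ _ _ hlt.ne'])
    convert Submodule.sub_mem _ (Submodule.subset_span (s := {e | IsIdempotentElem e}) hsum)
      (Submodule.subset_span (s := {e | IsIdempotentElem e}) (hdiag i)) using 1
    exact Subtype.ext (by simp)

theorem span_isIdempotentElem :
    Submodule.span C {e : upperTriangularAlgebra n C | IsIdempotentElem e} = ⊤ := by
  refine Submodule.eq_top_iff'.2 fun A => ?_
  have hA : A = ∑ i, ∑ j, ⟨_, single_apply_mem A i j⟩ := by
    ext : 1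
    simp only [AddSubmonoidClass.coe_finsetSum]
    exact matrix_eq_sum_single _
  rw [hA]
  refine Submodule.sum_mem _ fun i _ => Submodule.sum_mem _ fun j _ => ?_
  rcases le_or_gt i j with hij | hji
  · convert Submodule.smul_mem _ ((A : Matrix (Fin n) (Fin n) C) i j)
      (single_mem_span_isIdempotentElem (C := C) hij) using 1
    exact Subtype.ext (by simp [smul_single])
  · convert Submodule.zero_mem _ using 1
    exact Subtype.ext (by simp [A.2 hji])

theorem mul_apply_zero [NeZero n] (M : Matrix (Fin n) (Fin n) C) {N : Matrix (Fin n) (Fin n) C}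
    (hN : N ∈ upperTriangularAlgebra n C) (a : Fin n) : (M * N) a 0 = M a 0 * N 0 0 :=
  mul_apply.trans <| Fintype.sum_eq_single 0 fun k hk => by
    rw [hN ((Fin.pos_iff_ne_zero' k).2 hk), mul_zero]

theorem commutator_apply_zero [NeZero n] (A B : upperTriangularAlgebra n C) (a : Fin n) :
    ((A * B - B * A : upperTriangularAlgebra n C) : Matrix (Fin n) (Fin n) C) a 0 = 0 := by
  push_cast
  rw [Matrix.sub_apply, mul_apply_zero _ B.2, mul_apply_zero _ A.2]
  rcases eq_or_ne a 0 with rfl | ha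
  · rw [mul_comm, sub_self]
  · have ha' := (Fin.pos_iff_ne_zero' a).2 ha
    rw [A.2 ha', B.2 ha', zero_mul, zero_mul, sub_self]

theorem commutator_mul_eq_zero_iff (x : upperTriangularAlgebra n C) :
    (∀ A B : upperTriangularAlgebra n C, (A * B - B * A) * x = 0) ↔
      ∀ i j : Fin n, (i : ℕ) ≠ 0 → (x : Matrix (Fin n) (Fin n) C) i j = 0 := by
  constructor
  · intro hx i j hi
    have := Fin.neZero i
    have hi' : i ≠ 0 := Fin.val_ne_zero_iff.1 hi
    have h := congrFun (congrFun (congrArg Subtype.val (hx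
      ⟨single 0 0 1, single_mem le_rfl 1⟩ ⟨single 0 i 1, single_mem (Fin.zero_le i) 1⟩)) 0) j
    simpa [single_mul_single_same, single_mul_single_of_ne _ _ _ _ hi', sub_mul,
      single_mul_apply_same] using h
  · intro hx A B
    ext a b : 2
    have := Fin.neZero a
    rw [Subalgebra.coe_mul, mul_apply, Fintype.sum_eq_single 0
      (fun k hk => by rw [hx k b (Fin.val_ne_zero_iff.2 hk), mul_zero]),
      commutator_apply_zero, zero_mul, Subalgebra.coe_zero, Matrix.zero_apply]

end upperTriangularAlgebra

theorem left_gh_derivation_upperTriangular_iff_general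
    {C : Type*} [CommRing C] (n : ℕ)
    (f g h : upperTriangularAlgebra n C →ₗ[C] upperTriangularAlgebra n C) :
    (∀ A B : upperTriangularAlgebra n C,
        f (A * B) = A * g B + B * h A ∧ f (A * B) = A * h B + B * g A) ↔
      ∃ γ δ : upperTriangularAlgebra n C,
        (∀ i j : Fin n, (i : ℕ) ≠ 0 → (γ : Matrix (Fin n) (Fin n) C) i j = 0) ∧
        (∀ i j : Fin n, (i : ℕ) ≠ 0 → (δ : Matrix (Fin n) (Fin n) C) i j = 0) ∧
        (∀ A : upperTriangularAlgebra n C, g A = A * γ) ∧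
        (∀ A : upperTriangularAlgebra n C, h A = A * δ) ∧
        f = g + h := by
  change IsLeftGHDerivation f g h ↔ _
  rw [isLeftGHDerivation_iff (upperTriangularAlgebra.span_isIdempotentElem (n := n) (C := C))]
  simp only [upperTriangularAlgebra.commutator_mul_eq_zero_iff]

/-- characterization of left `{g,h}`-derivations on `T_n(C)`. -/
theorem left_gh_derivation_upperTriangular_iff
    {C : Type*} [CommRing C] (htf : ∀ c : C, 2 • c = 0 → c = 0)
    (n : ℕ) (hn : 2 ≤ n)
    (f g h : upperTriangularAlgebra n C →ₗ[C] upperTriangularAlgebra n C) :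
    (∀ A B : upperTriangularAlgebra n C,
        f (A * B) = A * g B + B * h A ∧ f (A * B) = A * h B + B * g A) ↔
      ∃ γ δ : upperTriangularAlgebra n C,
        (∀ i j : Fin n, (i : ℕ) ≠ 0 → (γ : Matrix (Fin n) (Fin n) C) i j = 0) ∧
        (∀ i j : Fin n, (i : ℕ) ≠ 0 → (δ : Matrix (Fin n) (Fin n) C) i j = 0) ∧
        (∀ A : upperTriangularAlgebra n C, g A = A * γ) ∧
        (∀ A : upperTriangularAlgebra n C, h A = A * δ) ∧
        f = g + h :=
  left_gh_derivation_upperTriangular_iff_general n f g h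
end

section
/- Let C be a 2-torsion free commutative ring with unity, let n ≥ 2, and let M_n(C) denote the algebra of n×n matrices over C. Linear maps f, g : M_n(C) → M_n(C) are such that f is a Jordan left {g,g}-derivation if and only if there exists a matrix α ∈ M_n(C) such that g(A) = Aα and f(A) = 2Aα for all A ∈ M_n(C). In particular, if f is a Jordan left {g,g}-derivation then f and g are right centralizers. -/
/-!
Taking `b = 1` in the Jordan identity gives `f a = a * g 1 + g a` (after cancelling 2), and then
`d a = g a - a * g 1` is itself a Jordan left `{d,d}`-derivation. Such a `d` kills every
idempotent `e` and every `x` with `e * x + x * e = x`: in both cases the identity yields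
`d x = 2 • (e * d x)`, and multiplying by `e` forces `e * d x = 0`, hence `d x = 0`. The matrix
units are of these two kinds, so `d = 0` on `M_n(C)`, that is `g = (· * g 1)` and `f = 2 • g`.
-/

def IsJordanLeftDerivation {R : Type*} [Ring R] (f g h : R → R) : Prop :=
  ∀ a b, f (a * b + b * a) = 2 • (a * g b + b * h a)

theorem eq_of_two_nsmul_eq {M : Type*} [AddCommGroup M] (h2 : ∀ x : M, 2 • x = 0 → x = 0)
    {x y : M} (h : 2 • x = 2 • y) : x = y :=
  sub_eq_zero.mp <| h2 _ <| by rw [smul_sub, h, sub_self]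

section Ring

variable {R : Type*} [Ring R]

theorem eq_zero_of_eq_two_nsmul_mul {e x : R} (he : IsIdempotentElem e) (hx : x = 2 • (e * x)) :
    x = 0 := by
  have hex : e * x = 0 := by
    have h := congrArg (e * ·) hx
    simp only [mul_smul_comm, ← mul_assoc, he.eq] at h
    rwa [two_nsmul, left_eq_add] at h
  rw [hx, hex, smul_zero]

theorem isJordanLeftDerivation_of_eq_mul {f g : R → R} (α : R) (hg : ∀ a, g a = a * α)
    (hf : ∀ a, f a = 2 • (a * α)) : IsJordanLeftDerivation f g g := by
  intro a b
  rw [hf, hg, hg, add_mul, mul_assoc, mul_assoc]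

namespace IsJordanLeftDerivation

variable {F : Type*} [FunLike F R R] [AddMonoidHomClass F R R]

theorem apply_eq_mul_add {f g : F} (h2 : ∀ x : R, 2 • x = 0 → x = 0)
    (hfg : IsJordanLeftDerivation f g g) (a : R) : f a = a * g 1 + g a := by
  have h := hfg a 1
  rw [mul_one, one_mul, one_mul, ← two_nsmul, map_nsmul] at h
  exact eq_of_two_nsmul_eq h2 h

theorem sub_mul_apply_one {f g : R → R} (hfg : IsJordanLeftDerivation f g g)
    (hf : ∀ a, f a = a * g 1 + g a) :
    IsJordanLeftDerivation (fun a ↦ g a - a * g 1) (fun a ↦ g a - a * g 1)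
      (fun a ↦ g a - a * g 1) := by
  intro a b
  have h := hf (a * b + b * a)
  rw [hfg a b] at h
  simp only [eq_sub_of_add_eq' h.symm, two_nsmul]
  noncomm_ring

theorem map_eq_zero_of_isIdempotentElem {d : F} (h2 : ∀ x : R, 2 • x = 0 → x = 0)
    (hd : IsJordanLeftDerivation d d d) {e : R} (he : IsIdempotentElem e) : d e = 0 := by
  refine eq_zero_of_eq_two_nsmul_mul he ?_
  have h := hd e e
  rw [he.eq, ← two_nsmul, map_nsmul, ← two_nsmul (e * d e)] at h
  exact eq_of_two_nsmul_eq h2 h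

theorem map_eq_zero_of_mul_add_mul_eq {d : R → R} (hd : IsJordanLeftDerivation d d d) {e x : R}
    (he : IsIdempotentElem e) (hde : d e = 0) (hx : e * x + x * e = x) : d x = 0 := by
  refine eq_zero_of_eq_two_nsmul_mul he ?_
  simpa [hx, hde] using hd e x

end IsJordanLeftDerivation

end Ring

namespace Matrix

theorem eq_zero_of_two_nsmul_eq_zero {m n α : Type*} [AddMonoid α]
    (h2 : ∀ c : α, 2 • c = 0 → c = 0) (X : Matrix m n α) (hX : 2 • X = 0) : X = 0 :=
  ext fun i j ↦ h2 _ (congrFun (congrFun hX i) j)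

variable {m C : Type*} [Fintype m] [DecidableEq m] [CommRing C]

theorem isIdempotentElem_single_one (i : m) : IsIdempotentElem (single i i (1 : C)) := by
  rw [IsIdempotentElem, single_mul_single_same, one_mul]

theorem isJordanLeftDerivation_eq_zero (htf : ∀ c : C, 2 • c = 0 → c = 0)
    {d : Matrix m m C →ₗ[C] Matrix m m C} (hd : IsJordanLeftDerivation d d d) : d = 0 := by
  have h2 : ∀ X : Matrix m m C, 2 • X = 0 → X = 0 := eq_zero_of_two_nsmul_eq_zero htf
  have hdiag (i : m) : d (single i i 1) = 0 :=
    hd.map_eq_zero_of_isIdempotentElem h2 (isIdempotentElem_single_one i)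
  have hsingle (i j : m) : d (single i j 1) = 0 := by
    rcases eq_or_ne i j with rfl | hij
    · exact hdiag i
    · refine hd.map_eq_zero_of_mul_add_mul_eq (isIdempotentElem_single_one i) (hdiag i) ?_
      rw [single_mul_single_same, one_mul, single_mul_single_of_ne _ _ _ _ hij.symm, add_zero]
  exact ext_linearMap C fun i j ↦ LinearMap.ext_ring (hsingle i j)

theorem isJordanLeftDerivation_iff (htf : ∀ c : C, 2 • c = 0 → c = 0)
    {f g : Matrix m m C →ₗ[C] Matrix m m C} :
    IsJordanLeftDerivation f g g ↔ ∃ α, (∀ A, g A = A * α) ∧ ∀ A, f A = 2 • (A * α) := by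
  refine ⟨fun hfg ↦ ⟨g 1, ?_⟩, fun ⟨α, hg, hf⟩ ↦ isJordanLeftDerivation_of_eq_mul α hg hf⟩
  have hf := hfg.apply_eq_mul_add (eq_zero_of_two_nsmul_eq_zero htf)
  have hd : g - LinearMap.mulRight C (g 1) = 0 :=
    isJordanLeftDerivation_eq_zero htf (hfg.sub_mul_apply_one hf)
  have hg (A : Matrix m m C) : g A = A * g 1 := sub_eq_zero.mp (LinearMap.congr_fun hd A)
  exact ⟨hg, fun A ↦ by rw [hf, ← hg, two_nsmul]⟩

end Matrix

theorem jordan_left_gg_derivation_matrix_iff_general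
    {C : Type*} [CommRing C] (htf : ∀ c : C, 2 • c = 0 → c = 0)
    (n : ℕ)
    (f g : Matrix (Fin n) (Fin n) C →ₗ[C] Matrix (Fin n) (Fin n) C) :
    ((∀ A B : Matrix (Fin n) (Fin n) C,
        f (A * B + B * A) = 2 • (A * g B + B * g A)) ↔
      ∃ α : Matrix (Fin n) (Fin n) C,
        (∀ A : Matrix (Fin n) (Fin n) C, g A = A * α) ∧
        (∀ A : Matrix (Fin n) (Fin n) C, f A = 2 • (A * α))) ∧
    ((∀ A B : Matrix (Fin n) (Fin n) C,
        f (A * B + B * A) = 2 • (A * g B + B * g A)) →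
      (∀ A B : Matrix (Fin n) (Fin n) C, f (A * B) = A * f B) ∧
      (∀ A B : Matrix (Fin n) (Fin n) C, g (A * B) = A * g B)) := by
  have hiff := Matrix.isJordanLeftDerivation_iff htf (f := f) (g := g)
  refine ⟨hiff, fun hfg ↦ ?_⟩
  obtain ⟨α, hg, hf⟩ := hiff.mp hfg
  exact ⟨fun A B ↦ by rw [hf, hf, mul_smul_comm, mul_assoc],
    fun A B ↦ by rw [hg, hg, mul_assoc]⟩

/-- `f` is a Jordan left `{g,g}`-derivation on `M_n(C)` iff there is a matrix
`α` with `g A = A * α` and `f A = 2 • (A * α)`; in particular `f` and `g` are then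
right centralizers. -/
theorem jordan_left_gg_derivation_matrix_iff
    {C : Type*} [CommRing C] (htf : ∀ c : C, 2 • c = 0 → c = 0)
    (n : ℕ) (hn : 2 ≤ n)
    (f g : Matrix (Fin n) (Fin n) C →ₗ[C] Matrix (Fin n) (Fin n) C) :
    ((∀ A B : Matrix (Fin n) (Fin n) C,
        f (A * B + B * A) = 2 • (A * g B + B * g A)) ↔
      ∃ α : Matrix (Fin n) (Fin n) C,
        (∀ A : Matrix (Fin n) (Fin n) C, g A = A * α) ∧
        (∀ A : Matrix (Fin n) (Fin n) C, f A = 2 • (A * α))) ∧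
    ((∀ A B : Matrix (Fin n) (Fin n) C,
        f (A * B + B * A) = 2 • (A * g B + B * g A)) →
      (∀ A B : Matrix (Fin n) (Fin n) C, f (A * B) = A * f B) ∧
      (∀ A B : Matrix (Fin n) (Fin n) C, g (A * B) = A * g B)) :=
  jordan_left_gg_derivation_matrix_iff_general htf n f g
end
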